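/- Let μ be a probability measure on Ω, let X be the Boolean sensitivity indicator of a record with μ(X = 0) > 0 and μ(X = 1) > 0, and let M⁽¹⁾, …, M⁽ⁿ⁾ be n release indicators, each produced by the OSDPRR mechanism with parameter ε > 0 for X, which are mutually conditionally independent given X, i.e. for every vector m ∈ {0,1}ⁿ and every a ∈ {0,1}: μ(⋂ₖ {M⁽ᵏ⁾ = mₖ} ∧ X = a)·μ(X = a)^{n−1} = ∏ₖ μ(M⁽ᵏ⁾ = mₖ ∧ X = a). Let E be the event that M⁽ᵏ⁾ = 0 for all k. Then μ(E) > 0 and P(X = 0 | E) / P(X = 1 | E) = e^{nε} · μ(X = 0) / μ(X = 1). -/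

import Mathlib

/-! Given `X = false` no mechanism ever releases, so `E ∩ {X = false}` has the full mass of
`{X = false}`; given `X = true` each mechanism withholds with probability `e^{-ε}`, and
conditional independence multiplies these to `μ(E ∩ {X = true}) = e^{-nε} μ(X = true)`.
The posterior odds are the ratio of these two masses. -/

open MeasureTheory Real

/-- Conditional probability `P(A | B) = μ(A ∩ B) / μ(B)`, as a real number. -/
noncomputable def condProb {Ω : Type*} [MeasurableSpace Ω] (μ : Measure Ω) (A B : Set Ω) : ℝ :=
  (μ (A ∩ B)).toReal / (μ B).toReal

section

variable {Ω : Type*} [MeasurableSpace Ω] (μ : Measure Ω)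

theorem measure_true_and_add_measure_false_and {f : Ω → Bool} (hf : Measurable f)
    (P : Ω → Prop) :
    μ {ω | f ω = true ∧ P ω} + μ {ω | f ω = false ∧ P ω} = μ {ω | P ω} := by
  convert measure_inter_add_sdiff (μ := μ) {ω | P ω} (hf (measurableSet_singleton true)) using 3
    <;> ext ω <;> simp [and_comm]

theorem toReal_measure_false_and_of_true_and [IsFiniteMeasure μ] {f : Ω → Bool}
    (hf : Measurable f) (P : Ω → Prop) {c : ℝ}
    (h : (μ {ω | f ω = true ∧ P ω}).toReal = (1 - c) * (μ {ω | P ω}).toReal) :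
    (μ {ω | f ω = false ∧ P ω}).toReal = c * (μ {ω | P ω}).toReal := by
  have hsum := congrArg ENNReal.toReal (measure_true_and_add_measure_false_and μ hf P)
  rw [ENNReal.toReal_add (measure_ne_top _ _) (measure_ne_top _ _), h] at hsum
  linarith

theorem toReal_measure_forall_and_of_condIndep [IsFiniteMeasure μ] {n : ℕ}
    {P : Fin n → Ω → Prop} {Q : Ω → Prop} {c : ℝ} (hQ : μ {ω | Q ω} ≠ 0)
    (hind : μ {ω | (∀ k, P k ω) ∧ Q ω} * μ {ω | Q ω} ^ (n - 1) = ∏ k, μ {ω | P k ω ∧ Q ω})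
    (hP : ∀ k, (μ {ω | P k ω ∧ Q ω}).toReal = c * (μ {ω | Q ω}).toReal) :
    (μ {ω | (∀ k, P k ω) ∧ Q ω}).toReal = c ^ n * (μ {ω | Q ω}).toReal := by
  cases n with
  | zero => simp
  | succ n =>
    have hq : (μ {ω | Q ω}).toReal ≠ 0 := ENNReal.toReal_ne_zero.2 ⟨hQ, measure_ne_top _ _⟩
    have hind' := congrArg ENNReal.toReal hind
    simp only [ENNReal.toReal_mul, ENNReal.toReal_pow, ENNReal.toReal_prod, hP,
      Finset.prod_const, Finset.card_univ, Fintype.card_fin, Nat.add_sub_cancel] at hind'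
    refine mul_right_cancel₀ (pow_ne_zero n hq) ?_
    rw [hind']
    ring

theorem condProb_div_condProb {B : Set Ω} (hB : (μ B).toReal ≠ 0) (A A' : Set Ω) :
    condProb μ A B / condProb μ A' B = (μ (A ∩ B)).toReal / (μ (A' ∩ B)).toReal :=
  div_div_div_cancel_right₀ hB _ _

end

theorem osdprr_posterior_odds_composition_general {Ω : Type*} [MeasurableSpace Ω]
    (μ : Measure Ω) [IsProbabilityMeasure μ]
    (X : Ω → Bool)
    (n : ℕ) (M : Fin n → Ω → Bool) (hMmeas : ∀ k, Measurable (M k))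
    (ε : ℝ)
    (hX0 : 0 < μ {ω | X ω = false}) (hX1 : 0 < μ {ω | X ω = true})
    -- each mechanism is an OSDPRR with parameter ε for X
    (hrel0 : ∀ k, μ {ω | M k ω = true ∧ X ω = false} = 0)
    (hrel1 : ∀ k, (μ {ω | M k ω = true ∧ X ω = true}).toReal
        = (1 - Real.exp (-ε)) * (μ {ω | X ω = true}).toReal)
    -- mutual conditional independence given X
    (hCI : ∀ (m : Fin n → Bool) (a : Bool),
      μ {ω | (∀ k, M k ω = m k) ∧ X ω = a} * μ {ω | X ω = a} ^ (n - 1)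
        = ∏ k, μ {ω | M k ω = m k ∧ X ω = a}) :
    0 < μ {ω | ∀ k, M k ω = false} ∧
      condProb μ {ω | X ω = false} {ω | ∀ k, M k ω = false}
          / condProb μ {ω | X ω = true} {ω | ∀ k, M k ω = false}
        = Real.exp (n * ε)
            * ((μ {ω | X ω = false}).toReal / (μ {ω | X ω = true}).toReal) := by
  have hE0 : (μ {ω | (∀ k, M k ω = false) ∧ X ω = false}).toReal
      = (μ {ω | X ω = false}).toReal := by
    simpa using toReal_measure_forall_and_of_condIndep μ (c := 1) hX0.ne' (hCI _ false)
      fun k ↦ toReal_measure_false_and_of_true_and μ (hMmeas k) _ (by simp [hrel0 k])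
  have hE1 : (μ {ω | (∀ k, M k ω = false) ∧ X ω = true}).toReal
      = Real.exp (-ε) ^ n * (μ {ω | X ω = true}).toReal :=
    toReal_measure_forall_and_of_condIndep μ hX1.ne' (hCI _ true)
      fun k ↦ toReal_measure_false_and_of_true_and μ (hMmeas k) _ (hrel1 k)
  have hEpos : 0 < (μ {ω | ∀ k, M k ω = false}).toReal := by
    refine (ENNReal.toReal_pos hX0.ne' (measure_ne_top _ _)).trans_le ?_
    rw [← hE0]
    exact ENNReal.toReal_mono (measure_ne_top _ _) (measure_mono fun ω h ↦ h.1)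
  refine ⟨ENNReal.toReal_pos_iff.1 hEpos |>.1, ?_⟩
  rw [condProb_div_condProb μ hEpos.ne', Set.inter_comm, ← Set.ofPred_and, hE0, Set.inter_comm,
    ← Set.ofPred_and, hE1, ← Real.exp_nat_mul, mul_neg, Real.exp_neg]
  field_simp

/-- If `n` release indicators are each produced by the OSDPRR mechanism with
parameter `ε > 0` for the sensitivity indicator `X`, and they are mutually conditionally
independent given `X`, then the event `E` that none of them releases the record has positive
probability and the posterior odds of the record being sensitive given `E` equal `e^{nε}` times
the prior odds. -/
theorem osdprr_posterior_odds_composition {Ω : Type*} [MeasurableSpace Ω]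
    (μ : Measure Ω) [IsProbabilityMeasure μ]
    (X : Ω → Bool) (hXmeas : Measurable X)
    (n : ℕ) (M : Fin n → Ω → Bool) (hMmeas : ∀ k, Measurable (M k))
    (ε : ℝ) (hε : 0 < ε)
    (hX0 : 0 < μ {ω | X ω = false}) (hX1 : 0 < μ {ω | X ω = true})
    -- each mechanism is an OSDPRR with parameter ε for X
    (hrel0 : ∀ k, μ {ω | M k ω = true ∧ X ω = false} = 0)
    (hrel1 : ∀ k, (μ {ω | M k ω = true ∧ X ω = true}).toReal
        = (1 - Real.exp (-ε)) * (μ {ω | X ω = true}).toReal)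
    -- mutual conditional independence given X
    (hCI : ∀ (m : Fin n → Bool) (a : Bool),
      μ {ω | (∀ k, M k ω = m k) ∧ X ω = a} * μ {ω | X ω = a} ^ (n - 1)
        = ∏ k, μ {ω | M k ω = m k ∧ X ω = a}) :
    0 < μ {ω | ∀ k, M k ω = false} ∧
      condProb μ {ω | X ω = false} {ω | ∀ k, M k ω = false}
          / condProb μ {ω | X ω = true} {ω | ∀ k, M k ω = false}
        = Real.exp (n * ε)
            * ((μ {ω | X ω = false}).toReal / (μ {ω | X ω = true}).toReal) :=
  osdprr_posterior_odds_composition_general μ X n M hMmeas ε hX0 hX1 hrel0 hrel1 hCI
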